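/- arXiv:2401.15262 — 2 statements merged into one kernel-verified Lean document; each statement's English description precedes it below -/
import Mathlib

section
/- Let h : ℝ^d → ℝ be differentiable with uniformly continuous gradient, and let ‖·‖ be a norm on ℝ^d with dual norm ‖·‖_* . Then for every z ∈ ℝ^d, (max over Δ with ‖Δ‖ ≤ δ of h(z+Δ)) − h(z) − δ‖∇h(z)‖_* is o(δ) as δ → 0⁺, uniformly in z. In particular, for fixed z, lim_{δ→0⁺} (1/δ)·(sup_{‖Δ‖≤δ} h(z+Δ) − h(z)) = ‖∇h(z)‖_*. -/
/-!
Uniform continuity of `∇h` and the mean value inequality give a first-order Taylor estimate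
`|h (z + Δ) - h z - ⟪Δ, ∇h z⟫| ≤ ε p(Δ)` for all small `p(Δ)`, uniformly in `z`. On the ball
`p(Δ) ≤ δ` the linear part attains its maximum `δ ‖∇h z‖_*` (the ball is compact, since a
definite seminorm on a finite-dimensional space dominates a multiple of the Euclidean norm), so
the supremum of `h (z + Δ)` is within `εδ` of `h z + δ ‖∇h z‖_*`.
-/

open RealInnerProductSpace Filter

/-- Dual norm of `y` with respect to the (semi)norm `p`, via the Euclidean pairing. -/
noncomputable def dualNorm {d : ℕ} (p : Seminorm ℝ (EuclideanSpace ℝ (Fin d)))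
    (y : EuclideanSpace ℝ (Fin d)) : ℝ :=
  sSup {t | ∃ x, p x ≤ 1 ∧ t = ⟪x, y⟫}

open Topology

namespace Seminorm

variable {E : Type*} [NormedAddCommGroup E] [NormedSpace ℝ E] [FiniteDimensional ℝ E]
  (p : Seminorm ℝ E)

protected theorem continuous_of_finiteDimensional : Continuous p :=
  continuousOn_univ.mp (p.convexOn.continuousOn isOpen_univ)

theorem exists_pos_mul_norm_le (hp : ∀ x, p x = 0 → x = 0) :
    ∃ c > 0, ∀ x, c * ‖x‖ ≤ p x := by
  obtain ⟨c, hc, hcp⟩ := (isCompact_sphere (0 : E) 1).exists_forall_le'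
    p.continuous_of_finiteDimensional.continuousOn
    (a := 0) fun u hu ↦ (apply_nonneg p u).lt_of_ne' fun h0 ↦
      by simpa [hp u h0] using mem_sphere_zero_iff_norm.mp hu
  refine ⟨c, hc, fun x ↦ ?_⟩
  rcases eq_or_ne x 0 with rfl | hx
  · simp
  have hnx : 0 < ‖x‖ := norm_pos_iff.mpr hx
  have hu : ‖x‖⁻¹ • x ∈ Metric.sphere (0 : E) 1 := by
    simp [norm_smul, hnx.ne']
  have := hcp _ hu
  rw [map_smul_eq_mul, norm_inv, norm_norm, inv_mul_eq_div, le_div_iff₀ hnx] at this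
  linarith

theorem isCompact_setOf_le (hp : ∀ x, p x = 0 → x = 0) (r : ℝ) :
    IsCompact {x | p x ≤ r} := by
  obtain ⟨c, hc, hcp⟩ := p.exists_pos_mul_norm_le hp
  refine (isCompact_closedBall (0 : E) (r / c)).of_isClosed_subset
    (isClosed_le p.continuous_of_finiteDimensional continuous_const) fun x hx ↦ ?_
  rw [mem_closedBall_zero_iff, le_div_iff₀ hc, mul_comm]
  exact (hcp x).trans hx

end Seminorm

section DualNorm

variable {d : ℕ} (p : Seminorm ℝ (EuclideanSpace ℝ (Fin d)))

theorem isGreatest_dualNorm (hp : ∀ x, p x = 0 → x = 0) (y : EuclideanSpace ℝ (Fin d)) :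
    IsGreatest {t | ∃ x, p x ≤ 1 ∧ t = ⟪x, y⟫} (dualNorm p y) := by
  have hset : {t | ∃ x, p x ≤ 1 ∧ t = ⟪x, y⟫} = (⟪·, y⟫) '' {x | p x ≤ 1} := by
    ext t; simp [eq_comm]
  rw [dualNorm, hset]
  exact ((p.isCompact_setOf_le hp 1).image (continuous_id.inner continuous_const)).isGreatest_sSup
    ⟨_, 0, by simp, rfl⟩

theorem isGreatest_mul_dualNorm (hp : ∀ x, p x = 0 → x = 0) (y : EuclideanSpace ℝ (Fin d))
    {δ : ℝ} (hδ : 0 < δ) :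
    IsGreatest {t | ∃ Δ, p Δ ≤ δ ∧ t = ⟪Δ, y⟫} (δ * dualNorm p y) := by
  obtain ⟨⟨x, hx, hxy⟩, hub⟩ := isGreatest_dualNorm p hp y
  refine ⟨⟨δ • x, ?_, ?_⟩, ?_⟩
  · rw [map_smul_eq_mul, Real.norm_of_nonneg hδ.le]
    exact mul_le_of_le_one_right hδ.le hx
  · rw [real_inner_smul_left, hxy]
  · rintro _ ⟨Δ, hΔ, rfl⟩
    have hscaled : p (δ⁻¹ • Δ) ≤ 1 := by
      rw [map_smul_eq_mul, norm_inv, Real.norm_of_nonneg hδ.le, inv_mul_le_iff₀ hδ, mul_one]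
      exact hΔ
    have := hub ⟨_, hscaled, rfl⟩
    rwa [real_inner_smul_left, inv_mul_le_iff₀ hδ] at this

end DualNorm

theorem exists_pos_forall_norm_sub_sub_fderiv_le {E F : Type*} [NormedAddCommGroup E]
    [NormedSpace ℝ E] [NormedAddCommGroup F] [NormedSpace ℝ F] {f : E → F}
    (hf : Differentiable ℝ f) (hf' : UniformContinuous (fderiv ℝ f)) {ε : ℝ} (hε : 0 < ε) :
    ∃ r > 0, ∀ z Δ, ‖Δ‖ < r → ‖f (z + Δ) - f z - fderiv ℝ f z Δ‖ ≤ ε * ‖Δ‖ := by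
  obtain ⟨r, hr, hclose⟩ := Metric.uniformContinuous_iff.mp hf' ε hε
  refine ⟨r, hr, fun z Δ hΔ ↦ ?_⟩
  have hz : z ∈ Metric.closedBall z ‖Δ‖ := Metric.mem_closedBall_self (norm_nonneg Δ)
  have hzΔ : z + Δ ∈ Metric.closedBall z ‖Δ‖ := by simp
  have hderiv : ∀ u ∈ Metric.closedBall z ‖Δ‖, ‖fderiv ℝ f u - fderiv ℝ f z‖ ≤ ε := fun u hu ↦
    (dist_eq_norm (fderiv ℝ f u) _ ▸ hclose ((Metric.mem_closedBall.mp hu).trans_lt hΔ)).le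
  simpa using (convex_closedBall z ‖Δ‖).norm_image_sub_le_of_norm_fderiv_le'
    (fun u _ ↦ hf u) hderiv hz hzΔ

theorem Seminorm.exists_pos_forall_abs_sub_sub_inner_le {E : Type*} [NormedAddCommGroup E]
    [InnerProductSpace ℝ E] [FiniteDimensional ℝ E] (p : Seminorm ℝ E)
    (hp : ∀ x, p x = 0 → x = 0) {f : E → ℝ} (hf : Differentiable ℝ f)
    (hf' : UniformContinuous (gradient f)) {ε : ℝ} (hε : 0 < ε) :
    ∃ δ₀ > 0, ∀ z Δ, p Δ < δ₀ → |f (z + Δ) - f z - ⟪Δ, gradient f z⟫| ≤ ε * p Δ := by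
  obtain ⟨c, hc, hcp⟩ := p.exists_pos_mul_norm_le hp
  have hfderiv : UniformContinuous (fderiv ℝ f) :=
    toDual_comp_gradient (f := f) ▸
      (InnerProductSpace.toDual ℝ E).isometry.uniformContinuous.comp hf'
  obtain ⟨r, hr, htaylor⟩ :=
    exists_pos_forall_norm_sub_sub_fderiv_le hf hfderiv (mul_pos hε hc)
  refine ⟨r * c, mul_pos hr hc, fun z Δ hΔ ↦ ?_⟩
  have hnorm : ‖Δ‖ < r := lt_of_mul_lt_mul_left ((hcp Δ).trans_lt (by linarith)) hc.le
  calc |f (z + Δ) - f z - ⟪Δ, gradient f z⟫|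
      = ‖f (z + Δ) - f z - fderiv ℝ f z Δ‖ := by
        rw [← toDual_gradient, InnerProductSpace.toDual_apply_apply,
          real_inner_comm, Real.norm_eq_abs]
    _ ≤ ε * c * ‖Δ‖ := htaylor z Δ hnorm
    _ ≤ ε * p Δ := by rw [mul_assoc]; exact mul_le_mul_of_nonneg_left (hcp Δ) hε.le

theorem abs_sSup_sub_sub_le_of_isGreatest {α : Type*} {P : α → Prop} {f g : α → ℝ}
    {c M η : ℝ} (hM : IsGreatest {t | ∃ a, P a ∧ t = g a} M)
    (hfg : ∀ a, P a → |f a - c - g a| ≤ η) :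
    |sSup {t | ∃ a, P a ∧ t = f a} - c - M| ≤ η := by
  obtain ⟨⟨a₀, ha₀, rfl⟩, hgM⟩ := hM
  have hub : ∀ t ∈ {t | ∃ a, P a ∧ t = f a}, t ≤ c + g a₀ + η := by
    rintro _ ⟨a, ha, rfl⟩
    have := hgM ⟨a, ha, rfl⟩
    linarith [(abs_le.mp (hfg a ha)).2]
  have hsup_le : sSup {t | ∃ a, P a ∧ t = f a} ≤ c + g a₀ + η :=
    csSup_le ⟨f a₀, a₀, ha₀, rfl⟩ hub
  have hle_sup : f a₀ ≤ sSup {t | ∃ a, P a ∧ t = f a} :=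
    le_csSup ⟨_, hub⟩ ⟨a₀, ha₀, rfl⟩
  rw [abs_le]
  constructor <;> linarith [(abs_le.mp (hfg a₀ ha₀)).1]

theorem tendsto_div_nhdsGT_zero_of_forall_abs_sub_mul_le {F : ℝ → ℝ} {L : ℝ}
    (hF : ∀ ε > 0, ∃ δ₀ > 0, ∀ δ : ℝ, 0 < δ → δ < δ₀ → |F δ - δ * L| ≤ ε * δ) :
    Tendsto (fun δ ↦ F δ / δ) (𝓝[>] 0) (𝓝 L) := by
  rw [Metric.tendsto_nhdsWithin_nhds]
  intro ε hε
  obtain ⟨δ₀, hδ₀, hF⟩ := hF (ε / 2) (half_pos hε)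
  refine ⟨δ₀, hδ₀, fun δ (hδ : 0 < δ) hδδ₀ ↦ ?_⟩
  rw [Real.dist_eq, sub_zero, abs_of_pos hδ] at hδδ₀
  rw [Real.dist_eq, div_sub' hδ.ne', abs_div, abs_of_pos hδ, div_lt_iff₀ hδ]
  linarith [hF δ hδ hδδ₀, mul_pos hε hδ]

/-- First-order regularization effect of adversarial training: the worst-case increase of `h`
over a `p`-ball of radius `δ` equals `δ` times the dual norm of the gradient, up to an `o(δ)`
error, uniformly in the base point; and in particular the pointwise one-sided limit holds. -/
theorem stmt0 {d : ℕ} (p : Seminorm ℝ (EuclideanSpace ℝ (Fin d)))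
    (hp : ∀ x, p x = 0 → x = 0)
    (h : EuclideanSpace ℝ (Fin d) → ℝ)
    (hdiff : Differentiable ℝ h)
    (hucont : UniformContinuous (gradient h)) :
    (∀ ε > 0, ∃ δ₀ > 0, ∀ δ : ℝ, 0 < δ → δ < δ₀ → ∀ z,
      |sSup {t | ∃ Δ, p Δ ≤ δ ∧ t = h (z + Δ)} - h z - δ * dualNorm p (gradient h z)| ≤ ε * δ)
    ∧ ∀ z, Tendsto
        (fun δ : ℝ => (sSup {t | ∃ Δ, p Δ ≤ δ ∧ t = h (z + Δ)} - h z) / δ)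
        (nhdsWithin 0 (Set.Ioi 0)) (nhds (dualNorm p (gradient h z))) := by
  have huniform : ∀ ε > 0, ∃ δ₀ > 0, ∀ δ : ℝ, 0 < δ → δ < δ₀ → ∀ z,
      |sSup {t | ∃ Δ, p Δ ≤ δ ∧ t = h (z + Δ)} - h z - δ * dualNorm p (gradient h z)|
        ≤ ε * δ := by
    intro ε hε
    obtain ⟨δ₀, hδ₀, htaylor⟩ := p.exists_pos_forall_abs_sub_sub_inner_le hp hdiff hucont hε
    refine ⟨δ₀, hδ₀, fun δ hδ hδδ₀ z ↦ ?_⟩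
    refine abs_sSup_sub_sub_le_of_isGreatest (isGreatest_mul_dualNorm p hp _ hδ)
      fun Δ hΔ ↦ ?_
    exact (htaylor z Δ (hΔ.trans_lt hδδ₀)).trans (mul_le_mul_of_nonneg_left hΔ hε.le)
  refine ⟨huniform, fun z ↦ tendsto_div_nhdsGT_zero_of_forall_abs_sub_mul_le fun ε hε ↦ ?_⟩
  obtain ⟨δ₀, hδ₀, hδ⟩ := huniform ε hε
  exact ⟨δ₀, hδ₀, fun δ h0 h1 ↦ hδ δ h0 h1 z⟩
end

section
/- Let V_n : ℝ^d → ℝ be a sequence of (random) convex functions and V : ℝ^d → ℝ a convex function with a unique minimizer u*. If V_n converges to V in the sense of finite-dimensional distributions (pointwise convergence in distribution, jointly on finite sets), and each V_n has a minimizer u_n, then u_n converges in distribution to u*. In the deterministic case: if convex functions V_n converge pointwise to a convex V with unique minimizer u*, and u_n minimizes V_n, and the sequence (u_n) is bounded, then u_n → u*. -/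
/-!
Pointwise convergence of convex functions is uniform from above near each point: around `a`
there is a simplex on which every `fᵢ` is bounded by its values at the finitely many vertices.
Since `a` is the midpoint of `w` and its reflection `2a - w`, convexity turns this upper bound
into `liminf fᵢ (wᵢ) ≥ g a` whenever `wᵢ → a`. Hence every cluster point of the minimizers
minimizes the limit, and a bounded sequence whose only cluster point is `u*` converges to it.
-/

open Filter Set Topology

section

variable {E ι : Type*} [NormedAddCommGroup E] [NormedSpace ℝ E] [FiniteDimensional ℝ E]
  {l : Filter ι} {f : ι → E → ℝ} {g : E → ℝ} {a : E}

lemma eventually_prod_nhds_lt_of_tendsto_convexOn (hf : ∀ i, ConvexOn ℝ univ (f i))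
    (hlim : ∀ x, Tendsto (f · x) l (𝓝 (g x))) (hg : ContinuousAt g a) {c : ℝ}
    (hc : g a < c) :
    ∀ᶠ p in l ×ˢ 𝓝 a, f p.1 p.2 < c := by
  obtain ⟨b, hab, hbc⟩ :=
    exists_mem_interior_convexHull_affineBasis (hg.eventually (gt_mem_nhds hc))
  have hvert : ∀ᶠ i in l, ∀ y ∈ range b, f i y < c :=
    (finite_range b).eventually_all.2 fun y hy =>
      (hlim y).eventually_lt_const (hbc (subset_convexHull ℝ _ hy))
  filter_upwards [hvert.prod_mk (isOpen_interior.mem_nhds hab)] with ⟨i, x⟩ ⟨hi, hx⟩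
  obtain ⟨y, hy, hxy⟩ := (hf i).exists_ge_of_mem_convexHull (subset_univ _) (interior_subset hx)
  exact hxy.trans_lt (hi y hy)

lemma eventually_lt_apply_of_tendsto_convexOn (hf : ∀ i, ConvexOn ℝ univ (f i))
    (hlim : ∀ x, Tendsto (f · x) l (𝓝 (g x))) (hg : ContinuousAt g a) {w : ι → E}
    (hw : Tendsto w l (𝓝 a)) {c : ℝ} (hc : c < g a) :
    ∀ᶠ i in l, c < f i (w i) := by
  set ε := (g a - c) / 3 with hε_def
  have hε : 0 < ε := by positivity
  have hreflect : Tendsto (fun i => a + (a - w i)) l (𝓝 a) := by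
    simpa using (tendsto_const_nhds (x := a)).add ((tendsto_const_nhds (x := a)).sub hw)
  have hupper : ∀ᶠ i in l, f i (a + (a - w i)) < g a + ε :=
    (tendsto_id.prodMk hreflect).eventually
      (eventually_prod_nhds_lt_of_tendsto_convexOn hf hlim hg (by linarith))
  filter_upwards [hupper, (hlim a).eventually_const_lt (show g a - ε < g a by linarith)]
    with i hi hi'
  have hmid := (hf i).2 (mem_univ (w i)) (mem_univ (a + (a - w i)))
    (by norm_num : (0 : ℝ) ≤ 1 / 2) (by norm_num : (0 : ℝ) ≤ 1 / 2) (by norm_num)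
  rw [show (1 / 2 : ℝ) • w i + (1 / 2 : ℝ) • (a + (a - w i)) = a by module] at hmid
  simp only [smul_eq_mul] at hmid
  linarith

lemma isMinOn_of_tendsto_convexOn [l.NeBot] (hf : ∀ i, ConvexOn ℝ univ (f i))
    (hlim : ∀ x, Tendsto (f · x) l (𝓝 (g x))) (hg : ContinuousAt g a) {w : ι → E}
    (hw : Tendsto w l (𝓝 a)) (hmin : ∀ i, IsMinOn (f i) univ (w i)) :
    IsMinOn g univ a :=
  isMinOn_univ_iff.2 fun x => le_of_forall_lt_imp_le_of_dense fun _ hc =>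
    ge_of_tendsto (hlim x) <|
      (eventually_lt_apply_of_tendsto_convexOn hf hlim hg hw hc).mono fun i hi =>
        hi.le.trans (isMinOn_univ_iff.1 (hmin i) x)

end

theorem stmt18_general {d : ℕ} (V : ℕ → (Fin d → ℝ) → ℝ) (Vlim : (Fin d → ℝ) → ℝ)
    (hconv : ∀ n, ConvexOn ℝ Set.univ (V n))
    (hconvlim : ConvexOn ℝ Set.univ Vlim)
    (hpt : ∀ u, Tendsto (fun n => V n u) atTop (nhds (Vlim u)))
    (ustar : Fin d → ℝ)
    (huniq : ∀ u, (∀ v, Vlim u ≤ Vlim v) → u = ustar)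
    (useq : ℕ → Fin d → ℝ)
    (hseq : ∀ n u, V n (useq n) ≤ V n u)
    (hbdd : ∃ C, ∀ n, ‖useq n‖ ≤ C) :
    Tendsto useq atTop (nhds ustar) := by
  obtain ⟨C, hC⟩ := hbdd
  refine (isCompact_closedBall 0 C).tendsto_nhds_of_unique_mapClusterPt
    (Eventually.of_forall fun n => mem_closedBall_zero_iff.2 (hC n)) fun a _ ha => ?_
  obtain ⟨ψ, hψ, hlim⟩ := ha.tendsto_subseq
  refine huniq a (isMinOn_univ_iff.1 ?_)
  exact isMinOn_of_tendsto_convexOn (fun k => hconv (ψ k))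
    (fun u => (hpt u).comp hψ.tendsto_atTop)
    ((hconvlim.continuousOn isOpen_univ).continuousAt univ_mem) hlim
    fun k => isMinOn_univ_iff.2 (hseq (ψ k))

/-- Argmin continuity for convex functions (deterministic version of the
Geyer / Fu–Knight epi-convergence argument): if convex `Vₙ → V` pointwise, `V` is convex with
unique minimizer `u*`, `uₙ` minimizes `Vₙ`, and `(uₙ)` is bounded, then `uₙ → u*`. -/
theorem stmt18 {d : ℕ} (V : ℕ → (Fin d → ℝ) → ℝ) (Vlim : (Fin d → ℝ) → ℝ)
    (hconv : ∀ n, ConvexOn ℝ Set.univ (V n))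
    (hconvlim : ConvexOn ℝ Set.univ Vlim)
    (hpt : ∀ u, Tendsto (fun n => V n u) atTop (nhds (Vlim u)))
    (ustar : Fin d → ℝ)
    (hmin : ∀ u, Vlim ustar ≤ Vlim u)
    (huniq : ∀ u, (∀ v, Vlim u ≤ Vlim v) → u = ustar)
    (useq : ℕ → Fin d → ℝ)
    (hseq : ∀ n u, V n (useq n) ≤ V n u)
    (hbdd : ∃ C, ∀ n, ‖useq n‖ ≤ C) :
    Tendsto useq atTop (nhds ustar) :=
  stmt18_general V Vlim hconv hconvlim hpt ustar huniq useq hseq hbdd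
end
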